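/- Let G=(V,E) be a finite simple graph. Then G ⊕ K₂ is the contact graph of a 3-dimensional sphere packing if and only if G is a penny graph. -/

import Mathlib

/-!
Invert in the point where the two spheres `a`, `b` of `K₂` touch. They become two parallel
planes, and every sphere touching both becomes a sphere of the same radius squeezed between
them, with its centre on the middle plane; inversion (with positive powers) preserves the sign of
`dist² - (sum of radii)²`, so contacts and non-contacts survive, and rescaling gives unit discs in
that plane. Conversely, a penny packing, inverted in a point of the plane outside all the discs,
turns into a sphere packing in space, and the two planes tangent to all the unit balls become two
touching spheres of radius `1/2` touching every other one.
-/

noncomputable section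

/-- A `d`-dimensional sphere packing with contact graph `G`, centres `p` and radii `r`:
the spheres have disjoint interiors and two spheres touch iff the vertices are adjacent. -/
def IsSpherePacking {V : Type*} (d : ℕ) (G : SimpleGraph V)
    (p : V → EuclideanSpace ℝ (Fin d)) (r : V → ℝ) : Prop :=
  (∀ v, 0 < r v) ∧
  ∀ v w : V, v ≠ w →
    r v + r w ≤ dist (p v) (p w) ∧ (dist (p v) (p w) = r v + r w ↔ G.Adj v w)

/-- The join `G ⊕ K₂` of `G` with the complete graph on two new vertices
(the two elements of `Fin 2`). -/
def joinK2 {V : Type*} (G : SimpleGraph V) : SimpleGraph (V ⊕ Fin 2) where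
  Adj x y :=
    match x, y with
    | Sum.inl u, Sum.inl v => G.Adj u v
    | Sum.inl _, Sum.inr _ => True
    | Sum.inr _, Sum.inl _ => True
    | Sum.inr i, Sum.inr j => i ≠ j
  symm := ⟨by
    rintro (u | i) (v | j) h
    · exact h.symm
    · trivial
    · trivial
    · exact h.symm⟩
  loopless := ⟨by
    rintro (u | i) h
    · exact G.irrefl h
    · exact h rfl⟩

/-- A penny graph: realisable as the contact graph of unit circles in the plane. -/
def IsPennyGraph {V : Type*} (G : SimpleGraph V) : Prop :=
  ∃ q : V → EuclideanSpace ℝ (Fin 2),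
    ∀ v w : V, v ≠ w → 2 ≤ dist (q v) (q w) ∧ (dist (q v) (q w) = 2 ↔ G.Adj v w)

open Module RealInnerProductSpace

theorem le_and_eq_iff_of_sq_sub_sq_eq_mul {P : Prop} {d s d' s' k : ℝ} (hd : 0 ≤ d) (hs : 0 ≤ s)
    (hd' : 0 ≤ d') (hs' : 0 ≤ s') (hk : 0 < k) (h : d' ^ 2 - s' ^ 2 = k * (d ^ 2 - s ^ 2)) :
    (s' ≤ d' ∧ (d' = s' ↔ P)) ↔ (s ≤ d ∧ (d = s ↔ P)) := by
  have hle : s' ≤ d' ↔ s ≤ d := by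
    rw [← sq_le_sq₀ hs' hd', ← sq_le_sq₀ hs hd, ← sub_nonneg, h, ← sub_nonneg (b := s ^ 2)]
    exact mul_nonneg_iff_of_pos_left hk
  have heq : d' = s' ↔ d = s := by
    rw [← sq_eq_sq₀ hd' hs', ← sq_eq_sq₀ hd hs, ← sub_eq_zero, h, ← sub_eq_zero (b := s ^ 2),
      mul_eq_zero, or_iff_right hk.ne']
  rw [hle, heq]

theorem exists_forall_lt_dist {V F : Type*} [Finite V] [NormedAddCommGroup F] [NormedSpace ℝ F]
    [Nontrivial F] (x : V → F) (ρ : ℝ) : ∃ c : F, ∀ v, ρ < dist (x v) c := by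
  obtain ⟨M, hM⟩ := Finite.exists_le fun v => ‖x v‖
  obtain ⟨c, hc⟩ := exists_norm_eq F (c := |ρ| + |M| + 1) (by positivity)
  refine ⟨c, fun v => ?_⟩
  calc ρ < ‖c‖ - ‖x v‖ := by linarith [le_abs_self ρ, le_abs_self M, hM v]
    _ ≤ dist (x v) c := by rw [dist_comm, dist_eq_norm]; exact norm_sub_norm_le c (x v)

section InnerProductSpace

variable {E : Type*} [NormedAddCommGroup E] [InnerProductSpace ℝ E]

/-- Inversion in the unit sphere at `0` maps the sphere `(u, r)` of power `D = ‖u‖² - r²` to the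
sphere `(D⁻¹ • u, r / D)`; this identity says it preserves the sign of `dist² - (r + r')²`. -/
theorem dist_inv_smul_inv_smul_sq_sub_sq (u u' : E) (r r' : ℝ) {D D' : ℝ}
    (hD : D = ‖u‖ ^ 2 - r ^ 2) (hD' : D' = ‖u'‖ ^ 2 - r' ^ 2) (h0 : D ≠ 0) (h0' : D' ≠ 0) :
    dist (D⁻¹ • u) (D'⁻¹ • u') ^ 2 - (r / D + r' / D') ^ 2
      = (dist u u' ^ 2 - (r + r') ^ 2) / (D * D') := by
  rw [dist_eq_norm, dist_eq_norm, norm_sub_sq_real, norm_sub_sq_real, norm_smul, norm_smul,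
    real_inner_smul_left, real_inner_smul_right, Real.norm_eq_abs, Real.norm_eq_abs, mul_pow,
    mul_pow, sq_abs, sq_abs]
  subst hD hD'
  field_simp
  ring

theorem exists_eq_sub_smul_and_eq_add_smul {a b : E} {ra rb : ℝ} (hra : 0 < ra) (hrb : 0 < rb)
    (hab : dist a b = ra + rb) : ∃ e t : E, ‖e‖ = 1 ∧ a = t - ra • e ∧ b = t + rb • e := by
  have hpos : 0 < ra + rb := by positivity
  refine ⟨(ra + rb)⁻¹ • (b - a), a + (ra / (ra + rb)) • (b - a), ?_, ?_, ?_⟩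
  · rw [norm_smul, ← dist_eq_norm', hab, Real.norm_eq_abs, abs_of_pos (inv_pos.2 hpos),
      inv_mul_cancel₀ hpos.ne']
  · rw [smul_smul, ← div_eq_mul_inv, add_sub_cancel_right]
  · rw [smul_smul, ← div_eq_mul_inv, add_assoc, ← add_smul, ← add_div,
      div_self hpos.ne', one_smul, add_sub_cancel]

/-- The spheres `(t - ra • e, ra)` and `(t + rb • e, rb)` touch at `t`. Inverting in `t`, they become
the planes `⟪x - t, e⟫ = -1 / (2 ra)` and `⟪x - t, e⟫ = 1 / (2 rb)`, and every sphere touching both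
becomes a sphere of radius `(ra + rb) / (4 ra rb)` centred on the plane halfway between them. -/
theorem inversion_of_tangent_to_both {c t e : E} {ρ ra rb D : ℝ} (he : ‖e‖ = 1) (hρ : 0 < ρ)
    (hra : 0 < ra) (hrb : 0 < rb) (hA : dist c (t - ra • e) = ρ + ra)
    (hB : dist c (t + rb • e) = ρ + rb) (hD : D = ‖c - t‖ ^ 2 - ρ ^ 2) :
    0 < D ∧ ρ / D = (ra + rb) / (4 * ra * rb) ∧
      ⟪D⁻¹ • (c - t), e⟫ = (ra + rb) / (4 * ra * rb) - 1 / (2 * ra) := by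
  have hA' : ‖c - t‖ ^ 2 + 2 * ra * ⟪c - t, e⟫ + ra ^ 2 = (ρ + ra) ^ 2 := by
    rw [← hA, dist_eq_norm, sub_sub_eq_add_sub, add_sub_right_comm, norm_add_sq_real,
      real_inner_smul_right, norm_smul, Real.norm_eq_abs, abs_of_pos hra, he]
    ring
  have hB' : ‖c - t‖ ^ 2 - 2 * rb * ⟪c - t, e⟫ + rb ^ 2 = (ρ + rb) ^ 2 := by
    rw [← hB, dist_eq_norm, sub_add_eq_sub_sub, norm_sub_sq_real (c - t),
      real_inner_smul_right, norm_smul, Real.norm_eq_abs, abs_of_pos hrb, he]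
    ring
  subst hD
  have hD : (ra + rb) * (‖c - t‖ ^ 2 - ρ ^ 2) = 4 * ρ * ra * rb := by
    linear_combination rb * hA' + ra * hB'
  have hDpos : 0 < ‖c - t‖ ^ 2 - ρ ^ 2 := by
    have : 0 < (ra + rb) * (‖c - t‖ ^ 2 - ρ ^ 2) := by rw [hD]; positivity
    exact pos_of_mul_pos_right this (by positivity)
  refine ⟨hDpos, ?_, ?_⟩
  · rw [div_eq_div_iff hDpos.ne' (by positivity)]
    linear_combination -hD
  · rw [real_inner_smul_left, inv_mul_eq_div, div_eq_iff hDpos.ne']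
    field_simp
    linear_combination (4 * rb) * hA' - 2 * hD

theorem exists_dist_eq_of_inner_eq {V : Type*} {n : ℕ} [Fact (finrank ℝ E = n + 1)] {e : E}
    (he : e ≠ 0) {x : V → E} {H : ℝ} (hx : ∀ v, ⟪x v, e⟫ = H) :
    ∃ y : V → EuclideanSpace ℝ (Fin n), ∀ v w, dist (y v) (y w) = dist (x v) (x w) := by
  let K := (ℝ ∙ e)ᗮ
  refine ⟨fun v => (OrthonormalBasis.fromOrthogonalSpanSingleton n he).repr
    (K.orthogonalProjectionOnto (x v)), fun v w => ?_⟩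
  have hmem : x v - x w ∈ K := by
    rw [Submodule.mem_orthogonal_singleton_iff_inner_left, inner_sub_left, hx, hx, sub_self]
  rw [LinearIsometryEquiv.dist_map, dist_eq_norm, ← map_sub,
    K.orthogonalProjectionOnto_mem_subspace_eq_self ⟨_, hmem⟩, dist_eq_norm]
  rfl

theorem exists_linearIsometry_inner_eq_zero (n : ℕ) [Fact (finrank ℝ E = n + 1)] :
    ∃ (ι : EuclideanSpace ℝ (Fin n) →ₗᵢ[ℝ] E) (e : E), ‖e‖ = 1 ∧ ∀ x, ⟪ι x, e⟫ = 0 := by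
  have : Nontrivial E := nontrivial_of_finrank_eq_succ (Fact.out : finrank ℝ E = n + 1)
  obtain ⟨e, he⟩ := exists_norm_eq E zero_le_one
  have he0 : e ≠ 0 := norm_ne_zero_iff.mp (he ▸ one_ne_zero)
  refine ⟨(ℝ ∙ e)ᗮ.subtypeₗᵢ.comp
    (OrthonormalBasis.fromOrthogonalSpanSingleton n he0).repr.symm.toLinearIsometry, e, he,
    fun x => ?_⟩
  exact Submodule.mem_orthogonal_singleton_iff_inner_left.mp (Subtype.prop _)

/-- The planes `⟪x, e⟫ = ±1`, tangent to all unit spheres centred in `eᗮ`, invert to the spheres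
`(±e / 2, 1 / 2)`, which touch the images of those unit spheres. -/
theorem norm_inv_smul_sub_smul_of_inner_eq_zero {u e : E} {s D : ℝ} (he : ‖e‖ = 1)
    (hue : ⟪u, e⟫ = 0) (hs : s ^ 2 = 1 / 4) (hD : D = ‖u‖ ^ 2 - 1) (hDpos : 0 < D) :
    ‖D⁻¹ • u - s • e‖ = D⁻¹ + 1 / 2 := by
  rw [← sq_eq_sq₀ (norm_nonneg _) (by positivity), norm_sub_sq_real, real_inner_smul_left,
    real_inner_smul_right, hue, norm_smul, norm_smul, Real.norm_eq_abs, Real.norm_eq_abs,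
    mul_pow, mul_pow, sq_abs, sq_abs, he, hs, show ‖u‖ ^ 2 = D + 1 by linarith]
  field_simp
  ring

end InnerProductSpace

instance (n : ℕ) : Fact (finrank ℝ (EuclideanSpace ℝ (Fin (n + 1))) = n + 1) :=
  ⟨finrank_euclideanSpace_fin⟩

section Packing

variable {V : Type*} {d n : ℕ} {G : SimpleGraph V}

theorem isPennyGraph_iff : IsPennyGraph G ↔ ∃ q, IsSpherePacking 2 G q fun _ => 1 := by
  simp only [IsPennyGraph, IsSpherePacking, one_add_one_eq_two, zero_lt_one, implies_true,
    true_and]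

theorem isSpherePacking_joinK2_iff {p : V ⊕ Fin 2 → EuclideanSpace ℝ (Fin d)}
    {r : V ⊕ Fin 2 → ℝ} :
    IsSpherePacking d (joinK2 G) p r ↔
      IsSpherePacking d G (p ∘ Sum.inl) (r ∘ Sum.inl) ∧ (∀ i, 0 < r (Sum.inr i)) ∧
        (∀ v i, dist (p (Sum.inl v)) (p (Sum.inr i)) = r (Sum.inl v) + r (Sum.inr i)) ∧
        dist (p (Sum.inr 0)) (p (Sum.inr 1)) = r (Sum.inr 0) + r (Sum.inr 1) := by
  constructor
  · rintro ⟨hr, hpack⟩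
    exact ⟨⟨fun v => hr _, fun v w hvw => hpack _ _ (Sum.inl_injective.ne hvw)⟩,
      fun i => hr _, fun v i => (hpack _ _ Sum.inl_ne_inr).2.2 trivial,
      (hpack (Sum.inr 0) (Sum.inr 1) (by simp)).2.2 (show (0 : Fin 2) ≠ 1 by decide)⟩
  · rintro ⟨⟨hrV, hV⟩, hrK, hVK, hK⟩
    refine ⟨Sum.rec hrV hrK, ?_⟩
    rintro (v | i) (w | j) hne
    · exact hV v w (fun h => hne (congrArg _ h))
    · exact ⟨(hVK v j).ge, iff_of_true (hVK v j) trivial⟩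
    · rw [dist_comm, add_comm]
      exact ⟨(hVK w i).ge, iff_of_true (hVK w i) trivial⟩
    · have hij : i ≠ j := fun h => hne (congrArg _ h)
      have hdist : dist (p (Sum.inr i)) (p (Sum.inr j)) = r (Sum.inr i) + r (Sum.inr j) := by
        fin_cases i <;> fin_cases j <;> simp_all [dist_comm, add_comm]
      exact ⟨hdist.ge, iff_of_true hdist hij⟩

theorem IsSpherePacking.exists_unit_of_tangent_to_both
    {c : V → EuclideanSpace ℝ (Fin (n + 1))} {ρ : V → ℝ} (h : IsSpherePacking (n + 1) G c ρ)
    {t e : EuclideanSpace ℝ (Fin (n + 1))} {ra rb : ℝ} (he : ‖e‖ = 1) (hra : 0 < ra)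
    (hrb : 0 < rb) (hA : ∀ v, dist (c v) (t - ra • e) = ρ v + ra)
    (hB : ∀ v, dist (c v) (t + rb • e) = ρ v + rb) :
    ∃ q : V → EuclideanSpace ℝ (Fin n), IsSpherePacking n G q fun _ => 1 := by
  obtain ⟨hρ, hpack⟩ := h
  obtain ⟨D, hD⟩ : ∃ D : V → ℝ, ∀ v, D v = ‖c v - t‖ ^ 2 - ρ v ^ 2 := ⟨_, fun _ => rfl⟩
  have hinv v := inversion_of_tangent_to_both he (hρ v) hra hrb (hA v) (hB v) (hD v)
  obtain ⟨R, hR_def⟩ : ∃ R, R = (ra + rb) / (4 * ra * rb) := ⟨_, rfl⟩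
  have hR : 0 < R := hR_def ▸ by positivity
  simp only [← hR_def] at hinv
  obtain ⟨y, hy⟩ := exists_dist_eq_of_inner_eq (n := n) (norm_ne_zero_iff.mp (he ▸ one_ne_zero))
    fun v => (hinv v).2.2
  refine ⟨fun v => R⁻¹ • y v, fun _ => one_pos, fun v w hvw => ?_⟩
  rw [dist_smul₀, hy, Real.norm_eq_abs, abs_of_pos (inv_pos.2 hR), one_add_one_eq_two]
  refine (le_and_eq_iff_of_sq_sub_sq_eq_mul dist_nonneg (add_pos (hρ v) (hρ w)).le
    ?_ zero_le_two (div_pos (div_pos (pow_pos (inv_pos.2 hR) 2) (hinv v).1) (hinv w).1) ?_).mpr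
    (hpack v w hvw)
  · exact mul_nonneg (inv_pos.2 hR).le dist_nonneg
  have hid := dist_inv_smul_inv_smul_sq_sub_sq (c v - t) (c w - t) (ρ v) (ρ w) (hD v) (hD w)
    (hinv v).1.ne' (hinv w).1.ne'
  rw [(hinv v).2.1, (hinv w).2.1, dist_sub_right] at hid
  linear_combination R⁻¹ ^ 2 * hid + 4 * (R⁻¹ * R + 1) * inv_mul_cancel₀ hR.ne'

theorem IsSpherePacking.exists_unit_of_joinK2 {p : V ⊕ Fin 2 → EuclideanSpace ℝ (Fin (n + 1))}
    {r : V ⊕ Fin 2 → ℝ} (h : IsSpherePacking (n + 1) (joinK2 G) p r) :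
    ∃ q : V → EuclideanSpace ℝ (Fin n), IsSpherePacking n G q fun _ => 1 := by
  obtain ⟨hV, hrK, hVK, hK⟩ := isSpherePacking_joinK2_iff.mp h
  obtain ⟨e, t, he, hA, hB⟩ := exists_eq_sub_smul_and_eq_add_smul (hrK 0) (hrK 1) hK
  exact hV.exists_unit_of_tangent_to_both he (hrK 0) (hrK 1) (fun v => hA ▸ hVK v 0)
    (fun v => hB ▸ hVK v 1)

theorem IsSpherePacking.exists_joinK2_of_unit [Finite V] [NeZero n]
    {q : V → EuclideanSpace ℝ (Fin n)} (h : IsSpherePacking n G q fun _ => 1) :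
    ∃ (p : V ⊕ Fin 2 → EuclideanSpace ℝ (Fin (n + 1))) (r : V ⊕ Fin 2 → ℝ),
      IsSpherePacking (n + 1) (joinK2 G) p r := by
  obtain ⟨c₀, hc₀⟩ := exists_forall_lt_dist q 1
  obtain ⟨ι, e, he, hιe⟩ := exists_linearIsometry_inner_eq_zero
    (E := EuclideanSpace ℝ (Fin (n + 1))) n
  set u := fun v => ι (q v - c₀)
  obtain ⟨D, hD_def⟩ : ∃ D : V → ℝ, ∀ v, D v = ‖u v‖ ^ 2 - 1 ^ 2 := ⟨_, fun _ => rfl⟩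
  have hD v : 0 < D v := by
    rw [hD_def, LinearIsometry.norm_map, ← dist_eq_norm, sub_pos]
    nlinarith [hc₀ v]
  let s : Fin 2 → ℝ := ![-(1 / 2), 1 / 2]
  refine ⟨Sum.elim (fun v => (D v)⁻¹ • u v) fun i => s i • e,
    Sum.elim (fun v => (D v)⁻¹) fun _ => 1 / 2, isSpherePacking_joinK2_iff.mpr
    ⟨⟨fun v => inv_pos.2 (hD v), fun v w hvw => ?_⟩, fun _ => one_half_pos, fun v i => ?_, ?_⟩⟩
  · obtain ⟨-, hpack⟩ := h
    refine (le_and_eq_iff_of_sq_sub_sq_eq_mul dist_nonneg zero_le_two dist_nonneg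
      (add_nonneg (inv_nonneg.2 (hD v).le) (inv_nonneg.2 (hD w).le))
      (one_div_pos.2 (mul_pos (hD v) (hD w))) ?_).mpr
      (by simpa only [one_add_one_eq_two] using hpack v w hvw)
    have hid := dist_inv_smul_inv_smul_sq_sub_sq (u v) (u w) 1 1 (hD_def v) (hD_def w)
      (hD v).ne' (hD w).ne'
    rw [ι.dist_map, dist_sub_right, one_div, one_div] at hid
    simp only [Function.comp_apply, Sum.elim_inl]
    rw [hid]
    ring
  · have hs : s i ^ 2 = 1 / 4 := by fin_cases i <;> norm_num [s]
    exact norm_inv_smul_sub_smul_of_inner_eq_zero he (hιe _) hs (by rw [hD_def, one_pow]) (hD v)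
  · simp only [Sum.elim_inr, dist_eq_norm, ← sub_smul, norm_smul, he, s]
    norm_num

end Packing

/-- Kirkpatrick–Rote: `G ⊕ K₂` is the contact graph of a sphere packing iff `G` is a
penny graph. -/
theorem joinK2_packing_iff_penny {V : Type*} [Fintype V] (G : SimpleGraph V) :
    (∃ (p : V ⊕ Fin 2 → EuclideanSpace ℝ (Fin 3)) (r : V ⊕ Fin 2 → ℝ),
      IsSpherePacking 3 (joinK2 G) p r) ↔ IsPennyGraph G := by
  rw [isPennyGraph_iff]
  exact ⟨fun ⟨_, _, h⟩ => h.exists_unit_of_joinK2, fun ⟨_, h⟩ => h.exists_joinK2_of_unit⟩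

end
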